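/- arXiv:1106.3088 — 5 statements merged into one kernel-verified Lean document; each statement's English description precedes it below -/
import Mathlib

section
/- Let P = (R, G) be a commutative partial field, let X and E be finite sets with |X| = r, and let A be an X×E matrix over R such that det(A[X,B]) ∈ G ∪ {0} for every B ⊆ E with |B| = r, and such that det(A[X,B₀]) ≠ 0 for at least one such B₀. Then there exists a matroid on ground set E whose bases are exactly the sets B ⊆ E with |B| = r and det(A[X,B]) ≠ 0. -/
/-!
Reduce modulo a maximal ideal `m` of `R`. Every nonzero maximal minor of `A` is a unit, so it stays
nonzero in the field `R ⧸ m`; hence the sets in question are exactly the column bases of the image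
of `A` over `R ⧸ m`, i.e. the bases of the linear matroid of its columns.
-/

open Matrix Set Submodule

section LinearMatroid

variable {K ι V : Type*} [DivisionRing K] [AddCommGroup V] [Module K V] {v : ι → V} {I : Set ι}

theorem maximal_linearIndepOn_iff :
    Maximal (LinearIndepOn K v) I ↔ LinearIndepOn K v I ∧ ∀ x, v x ∈ span K (v '' I) := by
  rw [maximal_iff_forall_insert fun _ _ ht hst ↦ ht.mono hst]
  refine and_congr_right fun hI ↦ forall_congr' fun x ↦ ?_
  rw [hI.mem_span_iff]
  tauto

variable (K) in
def IndepMatroid.ofLinearIndepOn (v : ι → V) : IndepMatroid ι where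
  E := univ
  Indep := LinearIndepOn K v
  indep_empty := linearIndepOn_empty K v
  indep_subset _ _ hJ hIJ := hJ.mono hIJ
  indep_aug I B hI hInotmax hBmax := by
    obtain ⟨x, hx⟩ : ∃ x, v x ∉ span K (v '' I) := by
      simpa [maximal_linearIndepOn_iff, hI] using hInotmax
    have hB := maximal_linearIndepOn_iff.1 hBmax
    obtain ⟨b, hbB, hb⟩ : ∃ b ∈ B, v b ∉ span K (v '' I) := by
      by_contra! h
      exact hx (span_le.2 (image_subset_iff.2 h) (hB.2 x))
    obtain ⟨hbI, hIb⟩ := hI.notMem_span_iff.1 hb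
    exact ⟨b, ⟨hbB, hIb⟩, hbI⟩
  indep_maximal X _ I hI hIX := by
    obtain ⟨J, hJX, hIJ, hXJ, hJ⟩ := exists_linearIndepOn_extension hI hIX
    refine ⟨J, hIJ, ⟨hJ, hJX⟩, fun L ⟨hL, hLX⟩ hJL x hxL ↦ ?_⟩
    exact hJ.mem_span_iff.1 (hXJ (mem_image_of_mem v (hLX hxL)))
      (hL.mono (insert_subset hxL hJL))
  subset_ground _ _ := subset_univ _

end LinearMatroid

theorem Set.encard_eq_card_of_equiv {α β : Type*} [Fintype α] {s : Set β} (f : α ≃ s) :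
    s.encard = Fintype.card α := by
  rw [encard, ← ENat.card_congr f, ENat.card_eq_coe_fintype_card]

namespace Matrix

variable {K X E : Type*} [Field K] [Fintype X] [DecidableEq X]

theorem linearIndepOn_col_iff_det_submatrix_ne_zero (A : Matrix X E K) {B : Set E} (f : X ≃ B) :
    LinearIndepOn K A.col B ↔ (A.submatrix id (fun x ↦ (f x : E))).det ≠ 0 := by
  rw [LinearIndepOn, ← linearIndependent_equiv f, ← isUnit_iff_ne_zero, ← isUnit_iff_isUnit_det,
    ← linearIndependent_cols_iff_isUnit]
  rfl

theorem isBase_of_det_submatrix_ne_zero (A : Matrix X E K) {B : Set E} (f : X ≃ B)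
    (hf : (A.submatrix id (fun x ↦ (f x : E))).det ≠ 0) :
    (IndepMatroid.ofLinearIndepOn K A.col).matroid.IsBase B := by
  have hB := (linearIndepOn_col_iff_det_submatrix_ne_zero A f).2 hf
  have hcard := encard_eq_card_of_equiv f
  refine ⟨hB, fun J hJ hBJ ↦ (Set.Finite.eq_of_subset_of_encard_le ?_ hBJ ?_).symm.le⟩
  · exact finite_of_encard_eq_coe hcard
  · simpa [hcard, rank_fun'] using hJ.encard_le_toENat_rank

theorem isBase_col_iff_exists_det_submatrix_ne_zero (A : Matrix X E K) {B₀ : Set E} (f₀ : X ≃ B₀)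
    (hf₀ : (A.submatrix id (fun x ↦ (f₀ x : E))).det ≠ 0) (B : Finset E) :
    (IndepMatroid.ofLinearIndepOn K A.col).matroid.IsBase B ↔
      ∃ f : X ≃ B, (A.submatrix id (fun x ↦ (f x : E))).det ≠ 0 := by
  refine ⟨fun hB ↦ ?_, fun ⟨f, hf⟩ ↦ isBase_of_det_submatrix_ne_zero A f hf⟩
  have hcard : Fintype.card X = Fintype.card B := by
    have := hB.encard_eq_encard_of_isBase (isBase_of_det_submatrix_ne_zero A f₀ hf₀)
    rw [encard_eq_card_of_equiv f₀, encard_coe_eq_coe_finsetCard] at this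
    simp [← Nat.cast_inj (R := ℕ∞), this]
  let f := Fintype.equivOfCardEq hcard
  exact ⟨f, (linearIndepOn_col_iff_det_submatrix_ne_zero A f).1 hB.indep⟩

end Matrix

theorem RingHom.map_ne_zero_iff_of_eq_zero_or_isUnit {R S : Type*} [Semiring R] [Semiring S]
    [Nontrivial S] (φ : R →+* S) {x : R} (hx : x = 0 ∨ IsUnit x) : φ x ≠ 0 ↔ x ≠ 0 := by
  rcases hx with rfl | hx
  · simp
  · exact iff_of_true (hx.map φ).ne_zero (ne_zero_of_map (hx.map φ).ne_zero)

theorem statement0_general {R : Type*} [CommRing R] (G : Subgroup Rˣ)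
    {X E : Type*} [Fintype X] [DecidableEq X]
    (r : ℕ) (hXr : Fintype.card X = r) (A : Matrix X E R)
    (hweak : ∀ B : Finset E, B.card = r → ∀ f : X ≃ B,
      (A.submatrix id (fun x => (f x : E))).det = 0 ∨
        ∃ g ∈ G, (A.submatrix id (fun x => (f x : E))).det = ((g : Rˣ) : R))
    (hnz : ∃ B : Finset E, B.card = r ∧ ∃ f : X ≃ B,
      (A.submatrix id (fun x => (f x : E))).det ≠ 0) :
    ∃ M : Matroid E, M.E = Set.univ ∧
      ∀ B : Finset E, M.IsBase (B : Set E) ↔ B.card = r ∧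
        ∃ f : X ≃ B, (A.submatrix id (fun x => (f x : E))).det ≠ 0 := by
  obtain ⟨B₀, hB₀, f₀, hf₀⟩ := hnz
  have : Nontrivial R := nontrivial_of_ne _ _ hf₀
  obtain ⟨m, hm⟩ := Ideal.exists_maximal R
  let := Ideal.Quotient.field m
  let φ := Ideal.Quotient.mk m
  have hdet : ∀ B : Finset E, B.card = r → ∀ f : X ≃ B,
      ((A.map φ).submatrix id (fun x ↦ (f x : E))).det ≠ 0 ↔
        (A.submatrix id (fun x ↦ (f x : E))).det ≠ 0 := by
    intro B hB f
    rw [submatrix_map, ← RingHom.mapMatrix_apply, ← RingHom.map_det]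
    refine φ.map_ne_zero_iff_of_eq_zero_or_isUnit ((hweak B hB f).imp_right ?_)
    rintro ⟨g, -, hg⟩
    exact hg ▸ g.isUnit
  refine ⟨(IndepMatroid.ofLinearIndepOn (R ⧸ m) (A.map φ).col).matroid, rfl, fun B ↦ ?_⟩
  rw [isBase_col_iff_exists_det_submatrix_ne_zero _ f₀ ((hdet B₀ hB₀ f₀).2 hf₀)]
  constructor
  · rintro ⟨f, hf⟩
    have hB : B.card = r := by rw [← hXr, Fintype.card_congr f, Fintype.card_coe]
    exact ⟨hB, f, (hdet B hB f).1 hf⟩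
  · rintro ⟨hB, f, hf⟩
    exact ⟨f, (hdet B hB f).2 hf⟩

/-- Let `P = (R, G)` be a commutative partial field (`R` a commutative ring,
`G` a subgroup of `Rˣ` with `-1 ∈ G`), let `X` and `E` be finite sets with `|X| = r`, and let
`A` be an `X × E` matrix over `R` such that `det A[X,B] ∈ G ∪ {0}` for every `B ⊆ E` with
`|B| = r`, and `det A[X,B₀] ≠ 0` for at least one such `B₀`. Then there is a matroid on `E`
whose bases are exactly the `r`-element sets `B` with `det A[X,B] ≠ 0`. -/
theorem statement0 {R : Type*} [CommRing R] (G : Subgroup Rˣ) (hG : (-1 : Rˣ) ∈ G)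
    {X E : Type*} [Fintype X] [DecidableEq X] [Fintype E] [DecidableEq E]
    (r : ℕ) (hXr : Fintype.card X = r) (A : Matrix X E R)
    (hweak : ∀ B : Finset E, B.card = r → ∀ f : X ≃ B,
      (A.submatrix id (fun x => (f x : E))).det = 0 ∨
        ∃ g ∈ G, (A.submatrix id (fun x => (f x : E))).det = ((g : Rˣ) : R))
    (hnz : ∃ B : Finset E, B.card = r ∧ ∃ f : X ≃ B,
      (A.submatrix id (fun x => (f x : E))).det ≠ 0) :
    ∃ M : Matroid E, M.E = Set.univ ∧
      ∀ B : Finset E, M.IsBase (B : Set E) ↔ B.card = r ∧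
        ∃ f : X ≃ B, (A.submatrix id (fun x => (f x : E))).det ≠ 0 :=
  statement0_general G r hXr A hweak hnz
end

section
/- Let 𝔻 = (ℤ[1/2], ⟨−1, 2⟩) be the dyadic partial field, where ℤ[1/2] is the subring of ℚ consisting of all rationals whose denominator is a power of 2, and ⟨−1, 2⟩ = {±2^z : z ∈ ℤ} is the multiplicative group generated by −1 and 2. If a matroid M is representable over 𝔻, then M is representable over the partial field (ℚ, ℚ*), and M is representable over the partial field (F, F*) for every finite field F of odd characteristic. -/
open Matrix

/-- The subring `ℤ[1/2]` of `ℚ`: all rationals whose denominator is a power of two. -/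
def DyadicSubring : Subring ℚ where
  carrier := {q : ℚ | ∃ (a : ℤ) (n : ℕ), q * 2 ^ n = a}
  zero_mem' := ⟨0, 0, by norm_num⟩
  one_mem' := ⟨1, 0, by norm_num⟩
  add_mem' := by
    rintro x y ⟨a, n, ha⟩ ⟨b, m, hb⟩
    refine ⟨a * 2 ^ m + b * 2 ^ n, n + m, ?_⟩
    push_cast
    rw [pow_add]
    linear_combination (2 : ℚ) ^ m * ha + (2 : ℚ) ^ n * hb
  mul_mem' := by
    rintro x y ⟨a, n, ha⟩ ⟨b, m, hb⟩
    refine ⟨a * b, n + m, ?_⟩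
    push_cast
    rw [pow_add]
    linear_combination (y * 2 ^ m) * ha + (a : ℚ) * hb
  neg_mem' := by
    rintro x ⟨a, n, ha⟩
    exact ⟨-a, n, by push_cast; linarith⟩

/-- `2` as a unit of the dyadic ring. -/
def dyadicTwo : DyadicSubringˣ where
  val := ⟨2, 2, 0, by norm_num⟩
  inv := ⟨2⁻¹, 1, 1, by norm_num⟩
  val_inv := by ext; norm_num
  inv_val := by ext; norm_num

/-- The subgroup `⟨-1, 2⟩ = {± 2 ^ z : z ∈ ℤ}` of the units of the dyadic ring. -/
def dyadicGroup : Subgroup DyadicSubringˣ := Subgroup.closure {-1, dyadicTwo}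

/-- A matroid `M` is representable over the commutative partial field `(R, G)` if there is a
weak `(R,G)`-matrix `A` (all maximal square subdeterminants lie in `G ∪ {0}`, and at least one
is nonzero) such that the bases of `M` are exactly the `r`-element column sets of `A` with
nonzero determinant. -/
def PFRepresentable {R : Type*} [CommRing R] (G : Subgroup Rˣ)
    {E : Type*} [Fintype E] [DecidableEq E] (M : Matroid E) : Prop :=
  ∃ (r : ℕ) (A : Matrix (Fin r) E R),
    (∀ B : Finset E, B.card = r → ∀ f : Fin r ≃ B,
      (A.submatrix id (fun x => (f x : E))).det = 0 ∨
        ∃ g ∈ G, (A.submatrix id (fun x => (f x : E))).det = ((g : Rˣ) : R)) ∧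
    (∃ B : Finset E, B.card = r ∧ ∃ f : Fin r ≃ B,
      (A.submatrix id (fun x => (f x : E))).det ≠ 0) ∧
    M.E = Set.univ ∧
    (∀ B : Finset E, M.IsBase (B : Set E) ↔ B.card = r ∧
      ∃ f : Fin r ≃ B, (A.submatrix id (fun x => (f x : E))).det ≠ 0)

/-! Since `ℤ[1/2]` is the localization of `ℤ` away from `2`, it maps into `ℚ` and into every
field in which `2 ≠ 0`. A ring homomorphism sends units to units, so it carries a weak
`𝔻`-matrix to a matrix with the same nonvanishing maximal minors, i.e. one representing
the same matroid. -/

namespace DyadicSubring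

lemma coe_dyadicTwo : ((dyadicTwo : DyadicSubringˣ) : DyadicSubring) = ((2 : ℤ) : DyadicSubring) := by
  ext
  simp [dyadicTwo]
  norm_cast

instance isLocalization_away_two : IsLocalization.Away (2 : ℤ) DyadicSubring where
  map_units := by
    rintro ⟨y, n, rfl⟩
    refine ⟨dyadicTwo ^ n, ?_⟩
    rw [Units.val_pow_eq_pow_val, coe_dyadicTwo]
    push_cast
    rfl
  surj := by
    rintro ⟨z, a, n, ha⟩
    refine ⟨⟨a, ⟨2 ^ n, n, rfl⟩⟩, ?_⟩
    ext
    push_cast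
    exact ha
  exists_of_eq := by
    intro x y h
    have hxy : x = y := by exact_mod_cast congrArg Subtype.val h
    exact ⟨1, by rw [hxy]⟩

end DyadicSubring

theorem PFRepresentable.map {R S : Type*} [CommRing R] [CommRing S] [Nontrivial S]
    {G : Subgroup Rˣ} {G' : Subgroup Sˣ} (φ : R →+* S) (hφ : ∀ g ∈ G, Units.map φ g ∈ G')
    {E : Type*} [Fintype E] [DecidableEq E] {M : Matroid E} (hM : PFRepresentable G M) :
    PFRepresentable G' M := by
  obtain ⟨r, A, hdet, hbase, hE, hbases⟩ := hM
  have det_map : ∀ (B : Finset E) (f : Fin r ≃ B),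
      ((A.map φ).submatrix id (fun x => (f x : E))).det =
        φ (A.submatrix id (fun x => (f x : E))).det := by
    intro B f
    rw [submatrix_map, ← RingHom.mapMatrix_apply, RingHom.map_det]
  have det_map_eq_zero : ∀ (B : Finset E) (f : Fin r ≃ B),
      ((A.map φ).submatrix id (fun x => (f x : E))).det = 0 ↔
        (A.submatrix id (fun x => (f x : E))).det = 0 := by
    intro B f
    rw [det_map]
    refine ⟨fun h => ?_, fun h => by rw [h, map_zero]⟩
    rcases hdet B (by simpa using Finset.card_eq_of_equiv_fin f.symm) f with h0 | ⟨g, -, hg⟩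
    · exact h0
    · rw [hg] at h
      exact absurd h (g.isUnit.map φ).ne_zero
  refine ⟨r, A.map φ, fun B hB f => ?_, ?_, hE, fun B => ?_⟩
  · rcases hdet B hB f with h0 | ⟨g, hg, hgdet⟩
    · exact Or.inl ((det_map_eq_zero B f).mpr h0)
    · exact Or.inr ⟨Units.map φ g, hφ g hg, by rw [det_map, hgdet]; rfl⟩
  · obtain ⟨B, hB, f, hf⟩ := hbase
    exact ⟨B, hB, f, (det_map_eq_zero B f).not.mpr hf⟩
  · rw [hbases B]
    exact and_congr_right fun _ => exists_congr fun f => (det_map_eq_zero B f).not.symm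

theorem PFRepresentable.map_top {R K : Type*} [CommRing R] [Field K] {G : Subgroup Rˣ}
    (φ : R →+* K) {E : Type*} [Fintype E] [DecidableEq E] {M : Matroid E}
    (hM : PFRepresentable G M) : PFRepresentable (⊤ : Subgroup Kˣ) M :=
  hM.map φ fun _ _ => Subgroup.mem_top _

/-- a matroid representable over the dyadic partial field
`𝔻 = (ℤ[1/2], ⟨-1, 2⟩)` is representable over `(ℚ, ℚ*)` and over `(F, F*)` for every
finite field `F` of odd characteristic. -/
theorem statement2 {E : Type*} [Fintype E] [DecidableEq E] (M : Matroid E)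
    (hM : PFRepresentable dyadicGroup M) :
    PFRepresentable (⊤ : Subgroup ℚˣ) M ∧
      ∀ (F : Type*) [Field F] [Fintype F], Odd (ringChar F) →
        PFRepresentable (⊤ : Subgroup Fˣ) M := by
  refine ⟨hM.map_top DyadicSubring.subtype, fun F _ _ hodd => ?_⟩
  have two_ne_zero : (2 : F) ≠ 0 := Ring.two_ne_zero fun h => by
    rw [h] at hodd
    exact Nat.not_odd_iff_even.mpr even_two hodd
  have two_isUnit : IsUnit (Int.castRingHom F 2) := by
    simpa using two_ne_zero.isUnit
  exact hM.map_top (IsLocalization.Away.lift (S := DyadicSubring) (2 : ℤ) two_isUnit)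
end

section
/- Let R be a ring, G a subgroup of the group of units R* of R with −1 ∈ G, E a finite set, and C an R-chain group on E. If c, c' ∈ C are G-primitive elementary chains with ‖c‖ = ‖c'‖, then c = g·c' (componentwise left multiplication) for some g ∈ G. -/
open Matrix Matroid

/-- The support of a chain `c : E → R`. -/
def chainSupport {R E : Type*} [Zero R] (c : E → R) : Set E := {e | c e ≠ 0}

/-- A chain of the chain group `C` is *elementary* if it is nonzero and no nonzero chain
of `C` has strictly smaller support. -/
def IsElementary {R E : Type*} [Zero R] (C : Set (E → R)) (c : E → R) : Prop :=
  c ∈ C ∧ c ≠ 0 ∧ ∀ c' ∈ C, c' ≠ (0 : E → R) → ¬ (chainSupport c' ⊂ chainSupport c)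

/-- A chain is `G`-primitive if all of its entries lie in `G ∪ {0}`. -/
def IsPrimitive {R E : Type*} [MonoidWithZero R] (G : Subgroup Rˣ) (c : E → R) : Prop :=
  ∀ e, c e = 0 ∨ ∃ g ∈ G, c e = ((g : Rˣ) : R)

/-- `C` is a chain group over the skew partial field `(R, G)` if every elementary chain of `C`
is a left `R`-multiple of a `G`-primitive chain of `C`. -/
def IsPChainGroup {R E : Type*} [Ring R] (G : Subgroup Rˣ) (C : Submodule R (E → R)) : Prop :=
  ∀ c, IsElementary (C : Set (E → R)) c →
    ∃ r : R, ∃ c' ∈ C, IsPrimitive G c' ∧ c = r • c'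

/-- A circuit of a matroid: a minimal dependent set. -/
def IsCircuit {E : Type*} (M : Matroid E) (X : Set E) : Prop :=
  ¬ M.Indep X ∧ ∀ Y, Y ⊂ X → M.Indep Y

/-- A cocircuit of a matroid: a circuit of the dual matroid. -/
def IsCocircuit {E : Type*} (M : Matroid E) (X : Set E) : Prop :=
  _root_.IsCircuit M✶ X

/-- `M` is "the" matroid `M(C)` of the chain group `C`: the ground set of `M` is all of `E`,
and the cocircuits of `M` are exactly the supports of the elementary chains of `C`. -/
def IsMatroidOf {R E : Type*} [Zero R] (M : Matroid E) (C : Set (E → R)) : Prop :=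
  M.E = Set.univ ∧
    ∀ X : Set E, _root_.IsCocircuit M X ↔ ∃ c, IsElementary C c ∧ chainSupport c = X

/-- The row span `{z ⬝ A : z ∈ R^X}` of a matrix, as a left `R`-submodule of `E → R`. -/
def rowSpan {R X E : Type*} [Ring R] [Fintype X] (A : Matrix X E R) :
    Submodule R (E → R) where
  carrier := {c | ∃ z : X → R, c = z ᵥ* A}
  add_mem' := by rintro a b ⟨z, rfl⟩ ⟨w, rfl⟩; exact ⟨z + w, (Matrix.add_vecMul A z w).symm⟩
  zero_mem' := ⟨0, (Matrix.zero_vecMul A).symm⟩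
  smul_mem' := by rintro r c ⟨z, rfl⟩; exact ⟨r • z, (Matrix.smul_vecMul r z A).symm⟩

/-- The deletion of `D` from the matroid `M`. -/
noncomputable def matroidDelete {α : Type*} (M : Matroid α) (D : Set α) : Matroid α :=
  M ↾ (M.E \ D)

/-- The contraction of `D` in the matroid `M`. -/
noncomputable def matroidContract {α : Type*} (M : Matroid α) (D : Set α) : Matroid α :=
  (M✶ ↾ (M✶.E \ D))✶

/-- The matroid `M` has rank `n`. -/
def RankEq {α : Type*} (M : Matroid α) (n : ℕ) : Prop :=
  ∃ B, M.IsBase B ∧ B.ncard = n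

theorem IsElementary.exists_ne_zero {R E : Type*} [Zero R] {C : Set (E → R)} {c : E → R}
    (hc : IsElementary C c) : ∃ e, c e ≠ 0 := by
  by_contra! h
  exact hc.2.1 (funext h)

theorem chainSupport_sub_smul_subset {R E : Type*} [Ring R] {c c' : E → R}
    (hsupp : chainSupport c = chainSupport c') (a : R) :
    chainSupport (c - a • c') ⊆ chainSupport c := by
  intro x hx
  by_contra hcx
  have hc'x : c' x = 0 := by
    by_contra h
    exact hcx (hsupp ▸ h)
  exact hx (by simp [not_not.mp hcx, hc'x])

theorem IsElementary.eq_zero_of_chainSupport_subset {R E : Type*} [Zero R] {C : Set (E → R)}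
    {c d : E → R} (hc : IsElementary C c) (hdC : d ∈ C) (hsub : chainSupport d ⊆ chainSupport c)
    {e : E} (hce : c e ≠ 0) (hde : d e = 0) : d = 0 := by
  by_contra hd
  exact hc.2.2 d hdC hd ⟨hsub, fun h => h hce hde⟩

theorem IsElementary.eq_smul_of_chainSupport_eq {R E : Type*} [Ring R] {C : Submodule R (E → R)}
    {c c' : E → R} (hc : IsElementary (C : Set (E → R)) c) (hc'C : c' ∈ C)
    (hsupp : chainSupport c = chainSupport c') {a : R} {e : E} (hce : c e ≠ 0)
    (ha : c e = a * c' e) : c = a • c' := by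
  have hd : c - a • c' = 0 :=
    hc.eq_zero_of_chainSupport_subset (C.sub_mem hc.1 (C.smul_mem a hc'C))
      (chainSupport_sub_smul_subset hsupp a) hce (by simp [ha])
  exact sub_eq_zero.mp hd

theorem statement3_general {R E : Type*} [Ring R]
    (G : Subgroup Rˣ)
    (C : Submodule R (E → R)) (c c' : E → R)
    (hc : IsElementary (C : Set (E → R)) c) (hc' : IsElementary (C : Set (E → R)) c')
    (hpc : IsPrimitive G c) (hpc' : IsPrimitive G c')
    (hsupp : chainSupport c = chainSupport c') :
    ∃ g ∈ G, c = fun e => ((g : Rˣ) : R) * c' e := by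
  obtain ⟨e, hce⟩ := hc.exists_ne_zero
  have hc'e : c' e ≠ 0 := show e ∈ chainSupport c' from hsupp ▸ hce
  obtain ⟨g, hgG, hg⟩ := (hpc e).resolve_left hce
  obtain ⟨g', hg'G, hg'⟩ := (hpc' e).resolve_left hc'e
  refine ⟨g * g'⁻¹, G.mul_mem hgG (G.inv_mem hg'G), ?_⟩
  refine hc.eq_smul_of_chainSupport_eq hc'.1 hsupp hce ?_
  rw [hg, hg', ← Units.val_mul, inv_mul_cancel_right]

/-- let `R` be a ring, `G ≤ Rˣ` with `-1 ∈ G`, `E` a finite set and `C` an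
`R`-chain group on `E`.  If `c, c'` are `G`-primitive elementary chains of `C` with the same
support, then `c = g • c'` for some `g ∈ G`. -/
theorem statement3 {R E : Type*} [Ring R] [Fintype E]
    (G : Subgroup Rˣ) (hG : (-1 : Rˣ) ∈ G)
    (C : Submodule R (E → R)) (c c' : E → R)
    (hc : IsElementary (C : Set (E → R)) c) (hc' : IsElementary (C : Set (E → R)) c')
    (hpc : IsPrimitive G c) (hpc' : IsPrimitive G c')
    (hsupp : chainSupport c = chainSupport c') :
    ∃ g ∈ G, c = fun e => ((g : Rˣ) : R) * c' e :=
  statement3_general G C c c' hc hc' hpc hpc' hsupp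
end

section
/- Let P = (R, G) be a skew partial field, E a finite set, and C a P-chain group on E. Then there exists a matroid M on ground set E such that the cocircuits of M (that is, the circuits of the dual matroid M*) are exactly the sets ‖c‖ for elementary chains c ∈ C. -/
open Matrix Matroid

/-!
The supports of the elementary chains of `C` satisfy the circuit axioms of a matroid: they are
nonempty, no one contains another, and weak circuit elimination holds. Elimination is where the
`P`-structure enters: writing one elementary chain as `r • c'` with `c'` primitive, the entry of
`c'` at the common element `e` is a unit, so a left multiple of `c'` cancels the other chain at
`e`, leaving a nonzero chain supported in the union minus `e`. The matroid with these circuits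
is built from its independent sets, and its dual is the required matroid.
-/

open Set

section CircuitAxioms

variable {α : Type*} (𝒞 : Set (Set α))

def IsCircuitFree (I : Set α) : Prop :=
  ∀ C ∈ 𝒞, ¬ C ⊆ I

def CircuitElimination : Prop :=
  ∀ C₁ ∈ 𝒞, ∀ C₂ ∈ 𝒞, C₁ ≠ C₂ → ∀ e ∈ C₁, e ∈ C₂ → ∃ C ∈ 𝒞, C ⊆ (C₁ ∪ C₂) \ {e}

variable {𝒞}

lemma IsCircuitFree.mono {I J : Set α} (hJ : IsCircuitFree 𝒞 J) (hIJ : I ⊆ J) :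
    IsCircuitFree 𝒞 I :=
  fun C hC hCI ↦ hJ C hC (hCI.trans hIJ)

lemma IsCircuitFree.insert_diff_singleton (h𝒞 : CircuitElimination 𝒞) {K : Set α} {f e : α}
    {C₀ : Set α} (hK : IsCircuitFree 𝒞 K) (hC₀ : C₀ ∈ 𝒞) (hC₀K : C₀ ⊆ insert f K)
    (he : e ∈ C₀) : IsCircuitFree 𝒞 (insert f K \ {e}) := by
  have mem_of_subset_insert {C : Set α} (hC : C ∈ 𝒞) (hCK : C ⊆ insert f K) : f ∈ C := by
    by_contra hf
    exact hK C hC fun x hx ↦ (hCK hx).resolve_left (by rintro rfl; exact hf hx)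
  intro C hC hCK
  have hne : C ≠ C₀ := by rintro rfl; exact (hCK he).2 rfl
  obtain ⟨C', hC', hC'sub⟩ := h𝒞 C hC C₀ hC₀ hne f
    (mem_of_subset_insert hC (hCK.trans sdiff_subset)) (mem_of_subset_insert hC₀ hC₀K)
  refine hK C' hC' fun x hx ↦ ?_
  obtain ⟨hx | hx, hxf⟩ := hC'sub hx
  · exact ((hCK hx).1).resolve_left hxf
  · exact (hC₀K hx).resolve_left hxf

/-- Independence augmentation, by induction on `|I \ J|`: a circuit blocking the augmentation
by `f ∈ J \ I` lets us swap some `e ∈ I \ J` for `f`. -/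
lemma IsCircuitFree.exists_insert_of_ncard_lt [Finite α] (h𝒞 : CircuitElimination 𝒞)
    {I J : Set α} (hI : IsCircuitFree 𝒞 I) (hJ : IsCircuitFree 𝒞 J) (hIJ : I.ncard < J.ncard) :
    ∃ e ∈ J, e ∉ I ∧ IsCircuitFree 𝒞 (insert e I) := by
  induction hn : (I \ J).ncard using Nat.strong_induction_on generalizing I with
  | _ n ih =>
  by_contra! hblocked
  obtain ⟨f, hfJ, hfI⟩ : ∃ f ∈ J, f ∉ I := by
    by_contra! hJI
    exact (ncard_le_ncard hJI).not_gt hIJ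
  obtain ⟨Cf, hCf, hCfsub⟩ : ∃ C ∈ 𝒞, C ⊆ insert f I := by
    simpa [IsCircuitFree] using hblocked f hfJ hfI
  obtain ⟨e, heCf, heJ⟩ : ∃ e ∈ Cf, e ∉ J := by
    by_contra! hCfJ
    exact hJ Cf hCf hCfJ
  have hfCf : f ∈ Cf := by
    by_contra hf
    exact hI Cf hCf fun x hx ↦ (hCfsub hx).resolve_left (by rintro rfl; exact hf hx)
  have heI : e ∈ I := (hCfsub heCf).resolve_left (by rintro rfl; exact heJ hfJ)
  set I' := insert f I \ {e}
  have hI' : IsCircuitFree 𝒞 I' := hI.insert_diff_singleton h𝒞 hCf hCfsub heCf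
  have hI'card : I'.ncard = I.ncard := by
    rw [ncard_sdiff_singleton_of_mem (mem_insert_of_mem f heI), ncard_insert_of_notMem hfI,
      Nat.add_sub_cancel]
  have hI'J : I' \ J ⊂ I \ J := by
    refine ⟨?_, fun h ↦ (h ⟨heI, heJ⟩).1.2 rfl⟩
    rintro x ⟨⟨rfl | hxI, -⟩, hxJ⟩
    · exact absurd hfJ hxJ
    · exact ⟨hxI, hxJ⟩
  obtain ⟨g, hgJ, hgI', hg⟩ := ih _ (hn ▸ ncard_lt_ncard hI'J) hI' (hI'card ▸ hIJ) rfl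
  have hgf : g ≠ f := by rintro rfl; exact hgI' ⟨mem_insert _ _, by rintro rfl; exact heJ hgJ⟩
  refine hblocked g hgJ (fun hgI ↦ hgI' ⟨Or.inr hgI, by rintro rfl; exact heJ hgJ⟩) ?_
  have hCf' : Cf ⊆ insert e (insert g I') := by
    intro x hx
    by_cases hxe : x = e
    · exact Or.inl hxe
    · exact Or.inr (Or.inr ⟨hCfsub hx, hxe⟩)
  refine (hg.insert_diff_singleton h𝒞 hCf hCf' hfCf).mono ?_
  · rintro x (rfl | hxI)
    · exact ⟨Or.inr (Or.inl rfl), hgf⟩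
    · refine ⟨?_, by rintro rfl; exact hfI hxI⟩
      by_cases hxe : x = e
      · exact Or.inl hxe
      · exact Or.inr (Or.inr ⟨Or.inr hxI, hxe⟩)

variable [Finite α]

noncomputable def matroidOfCircuits (h𝒞 : CircuitElimination 𝒞) (hempty : ∅ ∉ 𝒞) :
    Matroid α :=
  (IndepMatroid.ofFinite finite_univ (IsCircuitFree 𝒞)
    (fun _ hC hC0 ↦ hempty (subset_empty_iff.mp hC0 ▸ hC))
    (fun _ _ hJ hIJ ↦ hJ.mono hIJ)
    (fun _ _ hI hJ hIJ ↦ hI.exists_insert_of_ncard_lt h𝒞 hJ hIJ)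
    (fun I _ ↦ subset_univ I)).matroid

@[simp]
lemma matroidOfCircuits_indep_iff (h𝒞 : CircuitElimination 𝒞) (hempty : ∅ ∉ 𝒞) {I : Set α} :
    (matroidOfCircuits h𝒞 hempty).Indep I ↔ IsCircuitFree 𝒞 I :=
  Iff.rfl

lemma isCircuit_matroidOfCircuits_iff (h𝒞 : CircuitElimination 𝒞) (hempty : ∅ ∉ 𝒞)
    (hanti : IsAntichain (· ⊆ ·) 𝒞) {X : Set α} :
    _root_.IsCircuit (matroidOfCircuits h𝒞 hempty) X ↔ X ∈ 𝒞 := by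
  simp only [_root_.IsCircuit, matroidOfCircuits_indep_iff, IsCircuitFree, not_forall,
    not_not, exists_prop]
  constructor
  · rintro ⟨⟨C, hC, hCX⟩, hmin⟩
    obtain rfl | hCX := hCX.eq_or_ssubset
    · exact hC
    · exact absurd subset_rfl (hmin C hCX C hC)
  · intro hX
    exact ⟨⟨X, hX, subset_rfl⟩, fun Y hYX C hC hCY ↦
      hanti hC hX (hCY.trans_ssubset hYX).ne (hCY.trans hYX.subset)⟩

end CircuitAxioms

section ChainGroup

variable {R E : Type*}

lemma chainSupport_eq_empty_iff [Zero R] {c : E → R} : chainSupport c = ∅ ↔ c = 0 := by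
  simp [chainSupport, eq_empty_iff_forall_notMem, funext_iff]

lemma exists_isElementary_chainSupport_subset [Zero R] [Finite E] {C : Set (E → R)}
    {c : E → R} (hc : c ∈ C) (hc0 : c ≠ 0) :
    ∃ d, IsElementary C d ∧ chainSupport d ⊆ chainSupport c := by
  obtain ⟨d, ⟨hdC, hd0, hdc⟩, hmin⟩ := exists_minimalFor_of_wellFoundedLT
    (fun d ↦ d ∈ C ∧ d ≠ 0 ∧ chainSupport d ⊆ chainSupport c) chainSupport ⟨c, hc, hc0, le_rfl⟩
  exact ⟨d, ⟨hdC, hd0, fun d' hd'C hd'0 hd'd ↦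
    hd'd.not_subset (hmin ⟨hd'C, hd'0, hd'd.subset.trans hdc⟩ hd'd.subset)⟩, hdc⟩

lemma chainSupport_smul_of_isPrimitive [Ring R] {G : Subgroup Rˣ} {c : E → R}
    (hc : IsPrimitive G c) {r : R} (hr : r ≠ 0) : chainSupport (r • c) = chainSupport c := by
  ext e
  simp only [chainSupport, mem_ofPred_eq, Pi.smul_apply, smul_eq_mul]
  rcases hc e with he | ⟨g, -, hg⟩
  · simp [he]
  · have : Nontrivial R := ⟨⟨r, 0, hr⟩⟩
    simp [hg, hr]

variable [Ring R]

lemma isAntichain_chainSupport_isElementary (C : Set (E → R)) :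
    IsAntichain (· ⊆ ·) (chainSupport '' {c | IsElementary C c}) := by
  rintro _ ⟨c, hc, rfl⟩ _ ⟨d, hd, rfl⟩ hne hcd
  exact hd.2.2 c hc.1 hc.2.1 (hcd.ssubset_of_ne hne)

lemma empty_notMem_chainSupport_isElementary (C : Set (E → R)) :
    ∅ ∉ chainSupport '' {c | IsElementary C c} := by
  rintro ⟨c, hc, hc0⟩
  exact hc.2.1 (chainSupport_eq_empty_iff.mp hc0)

lemma circuitElimination_chainSupport_isElementary [Finite E] {G : Subgroup Rˣ}
    {C : Submodule R (E → R)} (hC : IsPChainGroup G C) :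
    CircuitElimination (chainSupport '' {c | IsElementary (C : Set (E → R)) c}) := by
  rintro _ ⟨c₁, hc₁, rfl⟩ _ ⟨c₂, hc₂, rfl⟩ hne e he₁ he₂
  obtain ⟨r, c', hc'C, hc', rfl⟩ := hC c₂ hc₂
  have hr : r ≠ 0 := by rintro rfl; exact hc₂.2.1 (zero_smul R c')
  rw [chainSupport_smul_of_isPrimitive hc' hr] at hne he₂ ⊢
  obtain ⟨g, -, hg⟩ := (hc' e).resolve_left he₂
  -- `s • c'` agrees with `c₁` at `e`
  set s := c₁ e * ((g⁻¹ : Rˣ) : R)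
  have hd : c₁ - s • c' ∈ C := C.sub_mem hc₁.1 (C.smul_mem s hc'C)
  have hd0 : c₁ - s • c' ≠ 0 := by
    intro h
    rw [sub_eq_zero] at h
    have hs : s ≠ 0 := by rintro hs; exact hc₁.2.1 (by rw [h, hs, zero_smul])
    have hsub : chainSupport c₁ ⊆ chainSupport c' := by
      rw [h, chainSupport_smul_of_isPrimitive hc' hs]
    have hnss := hc₂.2.2 c₁ hc₁.1 hc₁.2.1
    rw [chainSupport_smul_of_isPrimitive hc' hr] at hnss
    exact hne (hsub.eq_of_not_ssubset hnss)
  obtain ⟨d, hd, hdsub⟩ := exists_isElementary_chainSupport_subset hd hd0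
  refine ⟨_, ⟨d, hd, rfl⟩, hdsub.trans ?_⟩
  intro x hx
  simp only [chainSupport, mem_ofPred_eq, Pi.sub_apply, Pi.smul_apply, smul_eq_mul] at hx
  refine ⟨?_, ?_⟩
  · by_contra! hx'
    simp only [mem_union, chainSupport, mem_ofPred_eq, not_or, not_not] at hx'
    exact hx (by rw [hx'.1, hx'.2, mul_zero, sub_zero])
  · rintro rfl
    exact hx (by rw [hg, mul_assoc, Units.inv_mul, mul_one, sub_self])

end ChainGroup

theorem statement4_general {R E : Type*} [Ring R] [Fintype E]
    (G : Subgroup Rˣ)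
    (C : Submodule R (E → R)) (hC : IsPChainGroup G C) :
    ∃ M : Matroid E, IsMatroidOf M (C : Set (E → R)) := by
  refine ⟨(matroidOfCircuits (circuitElimination_chainSupport_isElementary hC)
    (empty_notMem_chainSupport_isElementary _))✶, rfl, fun X ↦ ?_⟩
  rw [_root_.IsCocircuit, Matroid.dual_dual,
    isCircuit_matroidOfCircuits_iff _ _ (isAntichain_chainSupport_isElementary _)]
  rfl

/-- let `P = (R, G)` be a skew partial field, `E` a finite set, and `C` a
`P`-chain group on `E`.  Then there is a matroid on ground set `E` whose cocircuits are
exactly the supports of the elementary chains of `C`. -/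
theorem statement4 {R E : Type*} [Ring R] [Fintype E]
    (G : Subgroup Rˣ) (hG : (-1 : Rˣ) ∈ G)
    (C : Submodule R (E → R)) (hC : IsPChainGroup G C) :
    ∃ M : Matroid E, IsMatroidOf M (C : Set (E → R)) :=
  statement4_general G C hC
end

section
/- Let M be a matroid on a finite set E with set of cocircuits 𝒞*, let P = (R, G) be a skew partial field, and for each X ∈ 𝒞* let a^X ∈ R^E be a G-primitive chain with ‖a^X‖ = X. Let C := {Σ_{X∈𝒞*} r_X·a^X : r_X ∈ R} be the left R-submodule of R^E generated by the chains a^X. Then C is a P-chain group with M(C) = M if and only if for every modular triple of cocircuits X, X', X'' ∈ 𝒞* there exist p, p', p'' ∈ G with p·a^X + p'·a^{X'} + p''·a^{X''} = 0. -/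
open Matrix Matroid

/-- `X, X', X''` is a modular triple of cocircuits of `M`: they are distinct cocircuits and
the contraction `M / S`, where `S = E(M) ∖ (X ∪ X' ∪ X'')`, has rank `2`. -/
def ModularTriple {α : Type*} (M : Matroid α) (X X' X'' : Set α) : Prop :=
  _root_.IsCocircuit M X ∧ _root_.IsCocircuit M X' ∧ _root_.IsCocircuit M X'' ∧
    X ≠ X' ∧ X ≠ X'' ∧ X' ≠ X'' ∧
    RankEq (matroidContract M (M.E \ (X ∪ X' ∪ X''))) 2

/-!
Forward direction: if `X, X', X''` is a modular triple, then `F = E ∖ (X ∪ X' ∪ X'')` spans a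
flat of corank two contained in the three hyperplanes `E ∖ X`, `E ∖ X'`, `E ∖ X''`, and two
hyperplanes containing such a flat and a common point outside it coincide. This yields
`e ∈ X ∩ X' ∖ X''` and `f ∈ X ∩ X'' ∖ X'` such that every cocircuit inside `X ∪ X' ∪ X''` meets
`{e, f}`. The `G`-combination of `a X, a X', a X''` that vanishes at `e` and `f` therefore has a
support containing no cocircuit, so it is zero because `M(C) = M`.

Backward direction: fix a base `B`. By induction on `|X ∩ B|`, every `a X` lies in the span of
the chains `a X_e` of the fundamental cocircuits `X_e`, `e ∈ B`: if `|X ∩ B| ≥ 2`, a corank-two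
flat inside `E ∖ X` containing `B ∖ X` gives a modular triple `X, X₁, X₂` with `X_i ∩ B ⊊ X ∩ B`,
and its relation expresses `a X` through `a X₁` and `a X₂`. Since `a X_e` vanishes on `B ∖ {e}`,
a chain of `C` vanishing on a base is zero; and a chain whose support contains no cocircuit
vanishes on some base. So every nonzero chain of `C` contains the support of some `a X`, from
which both the elementary chains and their supports are read off.
-/

open Set

namespace Matroid

variable {α : Type*} {M : Matroid α} {B I J K S X Y Y' Y₁ Y₂ Y₃ : Set α} {e x : α}

lemma IsCocircuit.not_spanning_compl (hX : M.IsCocircuit X) : ¬ M.Spanning (M.E \ X) :=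
  (isCocircuit_iff_minimal_compl_nonspanning.1 hX).prop

lemma IsCocircuit.spanning_insert_compl (hX : M.IsCocircuit X) (hx : x ∈ X) :
    M.Spanning (insert x (M.E \ X)) := by
  have hmin := isCocircuit_iff_minimal_compl_nonspanning.1 hX
  by_contra hsp
  have hxE : x ∈ M.E := hX.subset_ground hx
  have hP : ¬ M.Spanning (M.E \ (X \ {x})) := by
    rwa [Set.sdiff_sdiff_right, inter_eq_right.2 (singleton_subset_iff.2 hxE), union_singleton]
  have hXx := hmin.eq_of_subset hP sdiff_subset
  rw [← hXx] at hx
  exact hx.2 rfl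

lemma IsCocircuit.closure_compl (hX : M.IsCocircuit X) : M.closure (M.E \ X) = M.E \ X := by
  refine (M.subset_closure _).antisymm' fun x hx ↦ ⟨M.closure_subset_ground _ hx, fun hxX ↦ ?_⟩
  have hsp := hX.spanning_insert_compl hxX
  rw [← closure_spanning_iff, closure_insert_eq_of_mem_closure hx, closure_spanning_iff] at hsp
  exact hX.not_spanning_compl hsp

lemma IsCocircuit.closure_subset_compl (hY : M.IsCocircuit Y) (hI : I ⊆ M.E) (hYI : Disjoint Y I) :
    M.closure I ⊆ M.E \ Y := by
  rw [← hY.closure_compl]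
  exact M.closure_subset_closure (subset_sdiff.2 ⟨hI, hYI.symm⟩)

lemma IsCocircuit.eq_of_subset (hY : M.IsCocircuit Y) (hY' : M.IsCocircuit Y') (h : Y ⊆ Y') :
    Y = Y' :=
  IsCircuit.eq_of_subset_isCircuit hY hY' h

lemma IsCocircuit.eq_fundCocircuit (hX : M.IsCocircuit X) (hB : M.IsBase B) (he : X ∩ B = {e}) :
    X = M.fundCocircuit e B := by
  refine IsCircuit.eq_fundCircuit_of_subset hX hB.compl_isBase_dual.indep fun z hz ↦ ?_
  by_cases hzB : z ∈ B
  · exact .inl (he.subset ⟨hz, hzB⟩)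
  · exact .inr ⟨hX.subset_ground hz, hzB⟩


lemma IsBasis.contract_isBase_iff (hK : M.IsBasis K S) :
    (M ／ S).IsBase B ↔ M.IsBase (B ∪ K) ∧ Disjoint B S := by
  have hcoind : (M ／ K).Coindep (S \ K) :=
    (M ／ K)✶.coloops_indep.subset (by rw [dual_coloops]; exact hK.sdiff_subset_loops_contract)
  rw [hK.contract_eq_contract_delete, hcoind.delete_isBase_iff, hK.indep.contract_isBase_iff,
    and_assoc, ← disjoint_union_right, union_sdiff_cancel hK.subset]

lemma IsCocircuit.encard_isBasis_compl_add_one (hX : M.IsCocircuit X)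
    (hJ : M.IsBasis J (M.E \ X)) : J.encard + 1 = M.eRank := by
  obtain ⟨x, hx⟩ := hX.nonempty
  have hxJ : x ∉ M.closure J := by
    rw [hJ.closure_eq_closure, hX.closure_compl]
    exact fun h ↦ h.2 hx
  have hxJ' : x ∉ J := fun h ↦ hxJ (M.subset_closure J hJ.indep.subset_ground h)
  have hB : M.IsBase (insert x J) := by
    refine ((hJ.indep.insert_indep_iff_of_notMem hxJ').2
      ⟨hX.subset_ground hx, hxJ⟩).isBase_of_spanning ?_
    rw [spanning_iff_closure_eq (insert_subset (hX.subset_ground hx) hJ.indep.subset_ground),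
      ← closure_insert_closure_eq_closure_insert,
      hJ.closure_eq_closure, closure_insert_closure_eq_closure_insert]
    exact (hX.spanning_insert_compl hx).closure_eq
  rw [← hB.encard_eq_eRank, encard_insert_of_notMem hxJ']

lemma compl_closure_insert_inter_ssubset (hI : M.Indep I) (hX : M.IsCocircuit X)
    (hBI : B \ X ⊆ I) (he : e ∈ X ∩ B) : (M.E \ M.closure (insert e I)) ∩ B ⊂ X ∩ B :=
  ⟨fun _ ⟨hz, hzB⟩ ↦ ⟨by_contra fun hzX ↦ hz.2 (M.subset_closure_of_subset' (subset_insert e I)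
      hI.subset_ground (hBI ⟨hzB, hzX⟩)), hzB⟩,
    fun h ↦ (h he).1.2 (M.mem_closure_of_mem' (mem_insert e I) (hX.subset_ground he.1))⟩

variable [M.RankFinite]

lemma rankEq_contract_iff (n : ℕ) (hS : S ⊆ M.E := by aesop_mat) :
    RankEq (M ／ S) n ↔ M.eRk S + n = M.eRank := by
  obtain ⟨K, hK⟩ := M.exists_isBasis S
  rw [← hK.encard_eq_eRk]
  constructor
  · rintro ⟨B, hB, rfl⟩
    obtain ⟨hBK, hBS⟩ := hK.contract_isBase_iff.1 hB
    have hBfin : B.Finite := hBK.finite.subset subset_union_left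
    rw [← hBK.encard_eq_eRank, encard_union_eq (hBS.mono_right hK.subset), hBfin.cast_ncard_eq,
      add_comm]
  · intro hr
    obtain ⟨B, hB, hKB⟩ := hK.indep.exists_isBase_superset
    have hcard : (B \ K).encard + K.encard = n + K.encard := by
      rw [encard_sdiff_add_encard_of_subset hKB, hB.encard_eq_eRank, ← hr, add_comm]
    have hBK : (B \ K).encard = n :=
      WithTop.add_right_cancel (encard_ne_top_iff.2 hK.indep.finite) hcard
    refine ⟨B \ K, hK.contract_isBase_iff.2 ⟨by rwa [sdiff_union_of_subset hKB], ?_⟩, ?_⟩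
    · refine disjoint_left.2 fun z hz hzS ↦ hz.2 (hK.mem_of_insert_indep hzS ?_)
      exact hB.indep.subset (insert_subset hz.1 hKB)
    · rw [ncard_def, hBK, ENat.toNat_natCast]

lemma Indep.exists_insert_isBase (hJ : M.Indep J) (hr : J.encard + 1 = M.eRank) :
    ∃ e ∈ M.E \ J, M.IsBase (insert e J) := by
  obtain ⟨B, hB, hJB⟩ := hJ.exists_isBase_superset
  have hcard : (B \ J).encard + J.encard = 1 + J.encard := by
    rw [encard_sdiff_add_encard_of_subset hJB, hB.encard_eq_eRank, ← hr, add_comm]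
  obtain ⟨e, he⟩ :=
    encard_eq_one.1 (WithTop.add_right_cancel (encard_ne_top_iff.2 hJ.finite) hcard)
  have heB : e ∈ B \ J := he ▸ mem_singleton e
  refine ⟨e, ⟨hB.subset_ground heB.1, heB.2⟩, ?_⟩
  rwa [← union_singleton, ← he, union_sdiff_cancel hJB]

lemma Indep.compl_closure_isCocircuit (hJ : M.Indep J) (hr : J.encard + 1 = M.eRank) :
    M.IsCocircuit (M.E \ M.closure J) := by
  obtain ⟨e, he, hB⟩ := hJ.exists_insert_isBase hr
  simpa [he.2] using hB.compl_closure_sdiff_singleton_isCocircuit (mem_insert e J)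


section CorankTwo

/- `M.closure I` is a flat of corank two, and the cocircuits disjoint from `I` are the complements
of the hyperplanes containing it. -/

variable (hI : M.Indep I) (hr : I.encard + 2 = M.eRank)
include hI hr

lemma compl_closure_insert_isCocircuit (he : e ∈ M.E \ M.closure I) :
    M.IsCocircuit (M.E \ M.closure (insert e I)) := by
  have heI : e ∉ I := fun h ↦ he.2 (M.subset_closure I hI.subset_ground h)
  refine ((hI.insert_indep_iff_of_notMem heI).2 he).compl_closure_isCocircuit ?_
  rw [encard_insert_of_notMem heI, add_assoc, one_add_one_eq_two, hr]

lemma IsCocircuit.eq_compl_closure_insert (hY : M.IsCocircuit Y) (hYI : Disjoint Y I)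
    (he : e ∈ M.E \ M.closure I) (heY : e ∉ Y) : Y = M.E \ M.closure (insert e I) := by
  have hcl := hY.closure_subset_compl (insert_subset he.1 hI.subset_ground)
    (disjoint_insert_right.2 ⟨heY, hYI⟩)
  exact hY.eq_of_subset (compl_closure_insert_isCocircuit hI hr he)
    fun z hz ↦ ⟨hY.subset_ground hz, fun hzc ↦ (hcl hzc).2 hz⟩

lemma IsCocircuit.eq_of_notMem_of_notMem (hY : M.IsCocircuit Y) (hY' : M.IsCocircuit Y')
    (hYI : Disjoint Y I) (hY'I : Disjoint Y' I) (he : e ∈ M.E \ M.closure I) (heY : e ∉ Y)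
    (heY' : e ∉ Y') : Y = Y' :=
  (hY.eq_compl_closure_insert hI hr hYI he heY).trans
    (hY'.eq_compl_closure_insert hI hr hY'I he heY').symm

lemma exists_mem_inter_sdiff_of_isCocircuit (hY₁ : M.IsCocircuit Y₁) (hY₂ : M.IsCocircuit Y₂)
    (hY₃ : M.IsCocircuit Y₃) (hY₁I : Disjoint Y₁ I) (hY₂I : Disjoint Y₂ I)
    (hY₃I : Disjoint Y₃ I) (h₁₃ : Y₁ ≠ Y₃) (h₂₃ : Y₂ ≠ Y₃) :
    ∃ e ∈ M.E \ M.closure I, e ∈ Y₁ ∧ e ∈ Y₂ ∧ e ∉ Y₃ := by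
  have hcl₁ := hY₁.closure_subset_compl hI.subset_ground hY₁I
  obtain ⟨e, ⟨heE, heY₃⟩, hecl⟩ := not_subset.1 fun h : M.E \ Y₃ ⊆ M.closure I ↦
    h₁₃ (hY₁.eq_of_subset hY₃ fun z hz ↦ by_contra fun hz₃ ↦
      (hcl₁ (h ⟨hY₁.subset_ground hz, hz₃⟩)).2 hz)
  have he : e ∈ M.E \ M.closure I := ⟨heE, hecl⟩
  refine ⟨e, he, by_contra fun h ↦ h₁₃ ?_, by_contra fun h ↦ h₂₃ ?_, heY₃⟩
  · exact hY₁.eq_of_notMem_of_notMem hI hr hY₃ hY₁I hY₃I he h heY₃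
  · exact hY₂.eq_of_notMem_of_notMem hI hr hY₃ hY₂I hY₃I he h heY₃

lemma exists_forall_isCocircuit_mem_or_mem (hX : M.IsCocircuit X) (hX' : M.IsCocircuit X')
    (hX'' : M.IsCocircuit X'') (hXI : Disjoint X I) (hX'I : Disjoint X' I)
    (hX''I : Disjoint X'' I) (hXX' : X ≠ X') (hXX'' : X ≠ X'') (hX'X'' : X' ≠ X'') :
    ∃ e f, e ∈ X ∧ e ∈ X' ∧ e ∉ X'' ∧ f ∈ X ∧ f ∈ X'' ∧ f ∉ X' ∧
      ∀ Y, M.IsCocircuit Y → Disjoint Y I → e ∈ Y ∨ f ∈ Y := by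
  obtain ⟨e, he, heX, heX', heX''⟩ :=
    exists_mem_inter_sdiff_of_isCocircuit hI hr hX hX' hX'' hXI hX'I hX''I hXX'' hX'X''
  obtain ⟨f, hf, hfX, hfX'', hfX'⟩ :=
    exists_mem_inter_sdiff_of_isCocircuit hI hr hX hX'' hX' hXI hX''I hX'I hXX' hX'X''.symm
  refine ⟨e, f, heX, heX', heX'', hfX, hfX'', hfX', fun Y hY hYI ↦ ?_⟩
  by_contra! h
  exact hX'X'' ((hY.eq_of_notMem_of_notMem hI hr hX' hYI hX'I hf h.2 hfX').symm.trans
    (hY.eq_of_notMem_of_notMem hI hr hX'' hYI hX''I he h.1 heX''))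

lemma sdiff_union_eq_closure (hY₁ : M.IsCocircuit Y₁) (hY₂ : M.IsCocircuit Y₂)
    (hY₁I : Disjoint Y₁ I) (hY₂I : Disjoint Y₂ I) (hne : Y₁ ≠ Y₂) :
    M.E \ (Y₁ ∪ Y₂) = M.closure I := by
  have hcl₁ := hY₁.closure_subset_compl hI.subset_ground hY₁I
  have hcl₂ := hY₂.closure_subset_compl hI.subset_ground hY₂I
  refine subset_antisymm (fun z ⟨hzE, hz⟩ ↦ by_contra fun hzI ↦ hne ?_) fun z hz ↦
    ⟨(hcl₁ hz).1, fun h ↦ h.elim (hcl₁ hz).2 (hcl₂ hz).2⟩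
  rw [mem_union, not_or] at hz
  exact hY₁.eq_of_notMem_of_notMem hI hr hY₂ hY₁I hY₂I ⟨hzE, hzI⟩ hz.1 hz.2

lemma exists_mem_sdiff_closure_insert (hX : M.IsCocircuit X) (hXI : Disjoint X I)
    (hB : M.IsBase B) (hBI : B \ X ⊆ I) (he : e ∈ X) :
    ∃ f ∈ X ∩ B, f ∉ M.closure (insert e I) := by
  by_contra! h
  have hBcl : B ⊆ M.closure (insert e I) := fun z hz ↦ (em (z ∈ X)).elim (fun hzX ↦ h z ⟨hzX, hz⟩)
    fun hzX ↦ M.subset_closure_of_subset' (subset_insert e I) hI.subset_ground (hBI ⟨hz, hzX⟩)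
  obtain ⟨x, hxE, hx⟩ := (compl_closure_insert_isCocircuit hI hr
    ⟨hX.subset_ground he, fun h ↦ (hX.closure_subset_compl hI.subset_ground hXI h).2 he⟩).nonempty
  exact hx ((hB.closure_eq ▸ M.closure_subset_closure_of_subset_closure hBcl) hxE)

end CorankTwo

lemma IsCocircuit.exists_corank_two_indep (hX : M.IsCocircuit X) (hB : M.IsBase B)
    (hXB : (X ∩ B).Nontrivial) :
    ∃ I, M.Indep I ∧ I.encard + 2 = M.eRank ∧ B \ X ⊆ I ∧ Disjoint X I := by
  obtain ⟨J, hJ, hBJ⟩ := (hB.indep.subset sdiff_subset).subset_isBasis_of_subset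
    (sdiff_subset_sdiff_left hB.subset_ground : B \ X ⊆ M.E \ X)
  have hJr := hX.encard_isBasis_compl_add_one hJ
  have hne : B \ X ≠ J := by
    rintro rfl
    have hcard : (B \ X).encard + (X ∩ B).encard = (B \ X).encard + 1 := by
      rw [inter_comm, encard_sdiff_add_encard_inter, hB.encard_eq_eRank, hJr]
    exact (one_lt_encard_iff_nontrivial.2 hXB).ne'
      (WithTop.add_left_cancel (encard_ne_top_iff.2 hJ.indep.finite) hcard)
  obtain ⟨y, hyJ, hyBX⟩ := exists_of_ssubset (ssubset_of_subset_of_ne hBJ hne)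
  refine ⟨J \ {y}, hJ.indep.subset sdiff_subset, ?_, fun z hz ↦ ⟨hBJ hz, ?_⟩, ?_⟩
  · rw [← one_add_one_eq_two, ← add_assoc, encard_sdiff_singleton_add_one hyJ, hJr]
  · rintro rfl
    exact hyBX hz
  · exact disjoint_sdiff_right.mono_right (sdiff_subset.trans hJ.subset)

end Matroid

section Bridge

variable {α : Type*} {M : Matroid α} {X X' X'' : Set α}

lemma isCircuit_iff_isCircuit (hX : X ⊆ M.E) : _root_.IsCircuit M X ↔ M.IsCircuit X := by
  rw [Matroid.isCircuit_iff_forall_ssubset]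
  exact ⟨fun ⟨hX', hmin⟩ ↦ ⟨⟨hX', hX⟩, fun Y hY ↦ hmin Y hY⟩,
    fun ⟨hX', hmin⟩ ↦ ⟨hX'.1, fun Y hY ↦ hmin hY⟩⟩

lemma isCocircuit_iff_isCocircuit (hME : M.E = univ) :
    _root_.IsCocircuit M X ↔ M.IsCocircuit X :=
  isCircuit_iff_isCircuit (by simp [hME])

lemma modularTriple_iff [M.RankFinite] (hME : M.E = univ) :
    ModularTriple M X X' X'' ↔ M.IsCocircuit X ∧ M.IsCocircuit X' ∧ M.IsCocircuit X'' ∧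
      X ≠ X' ∧ X ≠ X'' ∧ X' ≠ X'' ∧ M.eRk (M.E \ (X ∪ X' ∪ X'')) + 2 = M.eRank := by
  simp only [ModularTriple, isCocircuit_iff_isCocircuit hME]
  rw [show matroidContract M (M.E \ (X ∪ X' ∪ X'')) = M ／ (M.E \ (X ∪ X' ∪ X'')) from rfl,
    Matroid.rankEq_contract_iff, Nat.cast_ofNat]

end Bridge

lemma Matroid.IsCocircuit.exists_modularTriple {α : Type*} {M : Matroid α} [M.RankFinite]
    {X B : Set α} (hME : M.E = univ) (hX : M.IsCocircuit X) (hB : M.IsBase B)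
    (hXB : (X ∩ B).Nontrivial) :
    ∃ X₁ X₂, ModularTriple M X X₁ X₂ ∧ X₁ ∩ B ⊂ X ∩ B ∧ X₂ ∩ B ⊂ X ∩ B := by
  obtain ⟨I, hI, hr, hBI, hXI⟩ := hX.exists_corank_two_indep hB hXB
  have hcocircuit : ∀ f ∈ X, M.IsCocircuit (M.E \ M.closure (insert f I)) := fun f hf ↦
    Matroid.compl_closure_insert_isCocircuit hI hr
      ⟨hX.subset_ground hf, fun h ↦ (hX.closure_subset_compl hI.subset_ground hXI h).2 hf⟩
  have hdisj : ∀ f, Disjoint (M.E \ M.closure (insert f I)) I := fun f ↦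
    disjoint_sdiff_left.mono_right
      (M.subset_closure_of_subset' (subset_insert f I) hI.subset_ground)
  have hsub := fun f (hf : f ∈ X ∩ B) ↦ Matroid.compl_closure_insert_inter_ssubset hI hX hBI hf
  have hne : ∀ f ∈ X ∩ B, X ≠ M.E \ M.closure (insert f I) := fun f hf h ↦
    (hsub f hf).ne (congrArg (· ∩ B) h).symm
  obtain ⟨f₁, hf₁⟩ := hXB.nonempty
  obtain ⟨f₂, hf₂, hf₂₁⟩ := Matroid.exists_mem_sdiff_closure_insert hI hr hX hXI hB hBI hf₁.1
  have hne₁₂ : M.E \ M.closure (insert f₁ I) ≠ M.E \ M.closure (insert f₂ I) := fun h ↦ by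
    have hf₂X₁ : f₂ ∈ M.E \ M.closure (insert f₁ I) := ⟨hX.subset_ground hf₂.1, hf₂₁⟩
    rw [h] at hf₂X₁
    exact hf₂X₁.2 (M.mem_closure_of_mem' (mem_insert f₂ I) (hX.subset_ground hf₂.1))
  refine ⟨_, _, (modularTriple_iff hME).2 ⟨hX, hcocircuit f₁ hf₁.1, hcocircuit f₂ hf₂.1,
    hne f₁ hf₁, hne f₂ hf₂, hne₁₂, ?_⟩, hsub f₁ hf₁, hsub f₂ hf₂⟩
  have hX₂cl := (hcocircuit f₂ hf₂.1).closure_subset_compl hI.subset_ground (hdisj f₂)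
  rw [← sdiff_sdiff, Matroid.sdiff_union_eq_closure hI hr hX (hcocircuit f₁ hf₁.1) hXI (hdisj f₁)
    (hne f₁ hf₁), sdiff_eq_left.2 (disjoint_left.2 fun z hz ↦ (hX₂cl hz).2),
    Matroid.eRk_closure_eq, hI.eRk_eq_encard, hr]

section Chains

variable {R E : Type*}

lemma ne_zero_of_chainSupport_eq [Zero R] {c : E → R} {X : Set E} (h : chainSupport c = X)
    (hX : X.Nonempty) : c ≠ 0 := fun hc ↦ hX.ne_empty (by rw [← h, hc]; exact Function.support_zero)

lemma exists_isElementary_support_subset [Zero R] [Finite E] {C : Set (E → R)} {c : E → R}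
    (hc : c ∈ C) (hc0 : c ≠ 0) : ∃ c₀, IsElementary C c₀ ∧ chainSupport c₀ ⊆ chainSupport c := by
  obtain ⟨-, hsub, ⟨c₀, hc₀, hc₀0, rfl⟩, hmin⟩ := exists_minimal_le_of_wellFoundedLT
    (fun X ↦ ∃ c' ∈ C, c' ≠ 0 ∧ chainSupport c' = X) (chainSupport c) ⟨c, hc, hc0, rfl⟩
  exact ⟨c₀, ⟨hc₀, hc₀0, fun c' hc' hc'0 hss ↦ hss.2 (hmin ⟨c', hc', hc'0, rfl⟩ hss.1)⟩, hsub⟩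

lemma IsMatroidOf.exists_isCocircuit_subset [Zero R] [Finite E] {M : Matroid E}
    {C : Set (E → R)} (hMC : IsMatroidOf M C) {c : E → R} (hc : c ∈ C) (hc0 : c ≠ 0) :
    ∃ Y, M.IsCocircuit Y ∧ Y ⊆ chainSupport c := by
  obtain ⟨c₀, hc₀, hsub⟩ := exists_isElementary_support_subset hc hc0
  exact ⟨_, (isCocircuit_iff_isCocircuit hMC.1).1 ((hMC.2 _).2 ⟨c₀, hc₀, rfl⟩), hsub⟩

lemma exists_smul_add_smul_add_smul_apply_eq_zero [Ring R] {G : Subgroup Rˣ} (hG : -1 ∈ G)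
    {u v w : E → R} (hu : IsPrimitive G u) (hv : IsPrimitive G v) (hw : IsPrimitive G w)
    {e f : E} (hue : u e ≠ 0) (hve : v e ≠ 0) (hwe : w e = 0) (huf : u f ≠ 0) (hvf : v f = 0)
    (hwf : w f ≠ 0) :
    ∃ p ∈ G, ∃ p' ∈ G, ∃ p'' ∈ G,
      (((p : Rˣ) : R) • u + ((p' : Rˣ) : R) • v + ((p'' : Rˣ) : R) • w) e = 0 ∧
      (((p : Rˣ) : R) • u + ((p' : Rˣ) : R) • v + ((p'' : Rˣ) : R) • w) f = 0 := by
  obtain ⟨α, hα, hαe⟩ := (hu e).resolve_left hue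
  obtain ⟨β, hβ, hβe⟩ := (hv e).resolve_left hve
  obtain ⟨γ, hγ, hγf⟩ := (hu f).resolve_left huf
  obtain ⟨δ, hδ, hδf⟩ := (hw f).resolve_left hwf
  refine ⟨α⁻¹, inv_mem hα, -β⁻¹, by simpa using mul_mem hG (inv_mem hβ),
    -(α⁻¹ * γ * δ⁻¹), by simpa using mul_mem hG (mul_mem (mul_mem (inv_mem hα) hγ) (inv_mem hδ)),
    ?_, ?_⟩
  · simp [hαe, hβe, hwe]
  · simp [hγf, hδf, hvf, mul_assoc]

def cocircuitSpan [Ring R] (M : Matroid E) (a : Set E → E → R) : Submodule R (E → R) :=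
  Submodule.span R (a '' {X | M.IsCocircuit X})

lemma mem_cocircuitSpan [Ring R] {M : Matroid E} {a : Set E → E → R} {X : Set E}
    (hX : M.IsCocircuit X) : a X ∈ cocircuitSpan M a :=
  Submodule.subset_span ⟨X, hX, rfl⟩

lemma eq_zero_of_mem_span_of_apply_eq_zero {R E ι : Type*} [Ring R] [Finite ι]
    {w : ι → E → R} {p : ι → E} (hw : ∀ i j, i ≠ j → w i (p j) = 0)
    (hu : ∀ i, IsUnit (w i (p i))) {v : E → R} (hv : v ∈ Submodule.span R (range w))
    (hvp : ∀ i, v (p i) = 0) : v = 0 := by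
  have := Fintype.ofFinite ι
  obtain ⟨r, rfl⟩ := (Submodule.mem_span_range_iff_exists_fun R).1 hv
  have hr : ∀ j, r j = 0 := fun j ↦ by
    have hj := hvp j
    rw [Finset.sum_apply, Finset.sum_eq_single j (fun i _ hij ↦ by simp [hw i j hij]) (by simp),
      Pi.smul_apply, smul_eq_mul] at hj
    exact (hu j).mul_left_eq_zero.1 hj
  simp [hr]

end Chains

section Forward

variable {R E : Type*} [Ring R] [Finite E] {G : Subgroup Rˣ} {M : Matroid E} {a : Set E → E → R}

lemma exists_smul_add_smul_add_smul_eq_zero_of_isMatroidOf (hG : -1 ∈ G)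
    (ha : ∀ X, M.IsCocircuit X → IsPrimitive G (a X) ∧ chainSupport (a X) = X)
    (hMC : IsMatroidOf M (cocircuitSpan M a : Set (E → R))) {X X' X'' : Set E}
    (hT : ModularTriple M X X' X'') :
    ∃ p ∈ G, ∃ p' ∈ G, ∃ p'' ∈ G,
      ((p : Rˣ) : R) • a X + ((p' : Rˣ) : R) • a X' + ((p'' : Rˣ) : R) • a X'' = 0 := by
  obtain ⟨hX, hX', hX'', hXX', hXX'', hX'X'', hr⟩ := (modularTriple_iff hMC.1).1 hT
  obtain ⟨K, hK⟩ := M.exists_isBasis (M.E \ (X ∪ X' ∪ X''))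
  rw [← hK.encard_eq_eRk] at hr
  have hTK : Disjoint (X ∪ X' ∪ X'') K := disjoint_sdiff_right.mono_right hK.subset
  obtain ⟨e, f, heX, heX', heX'', hfX, hfX'', hfX', hef⟩ :=
    Matroid.exists_forall_isCocircuit_mem_or_mem hK.indep hr hX hX' hX''
      (hTK.mono_left (subset_union_left.trans subset_union_left))
      (hTK.mono_left (subset_union_right.trans subset_union_left))
      (hTK.mono_left subset_union_right) hXX' hXX'' hX'X''
  have hmem : ∀ {Y}, M.IsCocircuit Y → ∀ z, a Y z ≠ 0 ↔ z ∈ Y := fun hY z ↦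
    Set.ext_iff.1 (ha _ hY).2 z
  obtain ⟨p, hp, p', hp', p'', hp'', hqe, hqf⟩ := exists_smul_add_smul_add_smul_apply_eq_zero hG
    (ha X hX).1 (ha X' hX').1 (ha X'' hX'').1 ((hmem hX e).2 heX) ((hmem hX' e).2 heX')
    (not_not.1 (mt (hmem hX'' e).1 heX'')) ((hmem hX f).2 hfX) (not_not.1 (mt (hmem hX' f).1 hfX'))
    ((hmem hX'' f).2 hfX'')
  refine ⟨p, hp, p', hp', p'', hp'', by_contra fun hq ↦ ?_⟩
  set q := ((p : Rˣ) : R) • a X + ((p' : Rˣ) : R) • a X' + ((p'' : Rˣ) : R) • a X''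
  have hqC : q ∈ cocircuitSpan M a :=
    add_mem (add_mem (Submodule.smul_mem _ _ (mem_cocircuitSpan hX))
      (Submodule.smul_mem _ _ (mem_cocircuitSpan hX')))
      (Submodule.smul_mem _ _ (mem_cocircuitSpan hX''))
  have hqT : chainSupport q ⊆ chainSupport (a X) ∪ chainSupport (a X') ∪ chainSupport (a X'') :=
    (Function.support_add _ _).trans (union_subset_union ((Function.support_add _ _).trans
      (union_subset_union (Function.support_const_smul_subset _ _)
        (Function.support_const_smul_subset _ _))) (Function.support_const_smul_subset _ _))
  rw [(ha X hX).2, (ha X' hX').2, (ha X'' hX'').2] at hqT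
  obtain ⟨Y, hY, hYq⟩ := hMC.exists_isCocircuit_subset hqC hq
  rcases hef Y hY (hTK.mono_left (hYq.trans hqT)) with he | hf
  · exact hYq he hqe
  · exact hYq hf hqf

end Forward

section Backward

variable {R E : Type*} [Ring R] [Finite E] {G : Subgroup Rˣ} {M : Matroid E} {a : Set E → E → R}
  {B X : Set E} {c : E → R}
  (hME : M.E = univ) (ha : ∀ X, M.IsCocircuit X → IsPrimitive G (a X) ∧ chainSupport (a X) = X)
  (hstar : ∀ X X' X'', ModularTriple M X X' X'' →
    ∃ p ∈ G, ∃ p' ∈ G, ∃ p'' ∈ G,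
      ((p : Rˣ) : R) • a X + ((p' : Rˣ) : R) • a X' + ((p'' : Rˣ) : R) • a X'' = 0)
include hME hstar

lemma mem_span_fundCocircuit (hB : M.IsBase B) (hX : M.IsCocircuit X) :
    a X ∈ Submodule.span R (range fun e : B ↦ a (M.fundCocircuit e B)) := by
  set W := Submodule.span R (range fun e : B ↦ a (M.fundCocircuit e B))
  induction hn : (X ∩ B).ncard using Nat.strong_induction_on generalizing X with
  | _ n ih =>
  obtain ⟨e, he⟩ | hXB :=
    ((isCocircuit_iff_minimal.1 hX).prop B hB).exists_eq_singleton_or_nontrivial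
  · rw [hX.eq_fundCocircuit hB he]
    exact Submodule.subset_span ⟨⟨e, (he.symm.subset (mem_singleton e)).2⟩, rfl⟩
  obtain ⟨X₁, X₂, hT, h₁, h₂⟩ := hX.exists_modularTriple hME hB hXB
  obtain ⟨-, hX₁, hX₂, -⟩ := (modularTriple_iff hME).1 hT
  obtain ⟨p, -, p₁, -, p₂, -, hrel⟩ := hstar X X₁ X₂ hT
  have hX₁W := ih _ (hn ▸ ncard_lt_ncard h₁ (toFinite _)) hX₁ rfl
  have hX₂W := ih _ (hn ▸ ncard_lt_ncard h₂ (toFinite _)) hX₂ rfl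
  rw [add_assoc] at hrel
  refine (W.smul_mem_iff' p).1 ?_
  rw [Units.smul_def, eq_neg_of_add_eq_zero_left hrel]
  exact W.neg_mem (W.add_mem (W.smul_mem _ hX₁W) (W.smul_mem _ hX₂W))

include ha

lemma exists_isCocircuit_subset_support (hc : c ∈ cocircuitSpan M a) (hc0 : c ≠ 0) :
    ∃ Y, M.IsCocircuit Y ∧ Y ⊆ chainSupport c := by
  by_contra! h
  have hco : M.Coindep (chainSupport c) :=
    Matroid.coindep_iff_forall_subset_not_isCocircuit.2 ⟨fun Y hYc hY ↦ h Y hY hYc, by simp [hME]⟩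
  obtain ⟨B, hB, hBc⟩ := hco.exists_isBase_subset_compl
  have hle : cocircuitSpan M a ≤ Submodule.span R (range fun e : B ↦ a (M.fundCocircuit e B)) :=
    Submodule.span_le.2 fun _ ⟨X, hX, hXa⟩ ↦ hXa ▸ mem_span_fundCocircuit hME hstar hB hX
  have hfund : ∀ e : B, M.IsCocircuit (M.fundCocircuit e B) := fun e ↦
    Matroid.fundCocircuit_isCocircuit e.2 hB
  refine hc0 (eq_zero_of_mem_span_of_apply_eq_zero (p := Subtype.val) (fun i j hij ↦ ?_)
    (fun i ↦ ?_) (hle hc) fun e ↦ not_not.1 (hBc e.2).2)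
  · refine not_not.1 fun hj ↦ hij (Subtype.ext ?_).symm
    have hjB : j.1 ∈ M.fundCocircuit i B ∩ B := ⟨(Set.ext_iff.1 (ha _ (hfund i)).2 j).1 hj, j.2⟩
    rwa [M.fundCocircuit_inter_eq i.2] at hjB
  · obtain ⟨g, -, hg⟩ := ((ha _ (hfund i)).1 i).resolve_left
      ((Set.ext_iff.1 (ha _ (hfund i)).2 i).2 (M.mem_fundCocircuit i B))
    exact hg ▸ g.isUnit

lemma exists_eq_smul_of_support_subset (hX : M.IsCocircuit X) (hc : c ∈ cocircuitSpan M a)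
    (hcX : chainSupport c ⊆ X) : ∃ r : R, c = r • a X := by
  obtain ⟨e, he⟩ := hX.nonempty
  obtain ⟨g, -, hg⟩ := ((ha X hX).1 e).resolve_left ((Set.ext_iff.1 (ha X hX).2 e).2 he)
  refine ⟨c e * ↑g⁻¹, sub_eq_zero.1 (by_contra fun hd ↦ ?_)⟩
  obtain ⟨Y, hY, hYd⟩ := exists_isCocircuit_subset_support hME ha hstar
    (sub_mem hc (Submodule.smul_mem _ _ (mem_cocircuitSpan hX))) hd
  have hdX : chainSupport (c - (c e * ↑g⁻¹) • a X) ⊆ X :=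
    (Function.support_sub _ _).trans (union_subset hcX
      ((Function.support_const_smul_subset _ _).trans (ha X hX).2.subset))
  have heY : e ∈ Y := (hY.eq_of_subset hX (hYd.trans hdX)).symm ▸ he
  exact hYd heY (by simp [hg, mul_assoc])

lemma IsElementary.isCocircuit_support (hc : IsElementary (cocircuitSpan M a : Set (E → R)) c) :
    M.IsCocircuit (chainSupport c) := by
  obtain ⟨hcC, hc0, hmin⟩ := hc
  obtain ⟨Y, hY, hYc⟩ := exists_isCocircuit_subset_support hME ha hstar hcC hc0
  obtain rfl | hss := hYc.eq_or_ssubset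
  · exact hY
  · exact (hmin (a Y) (mem_cocircuitSpan hY) (ne_zero_of_chainSupport_eq (ha Y hY).2 hY.nonempty)
      (by rwa [(ha Y hY).2])).elim

lemma isPChainGroup_cocircuitSpan : IsPChainGroup G (cocircuitSpan M a) := fun c hc ↦ by
  have hX := hc.isCocircuit_support hME ha hstar
  obtain ⟨r, hr⟩ := exists_eq_smul_of_support_subset hME ha hstar hX hc.1 subset_rfl
  exact ⟨r, _, mem_cocircuitSpan hX, (ha _ hX).1, hr⟩

lemma isMatroidOf_cocircuitSpan : IsMatroidOf M (cocircuitSpan M a : Set (E → R)) := by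
  refine ⟨hME, fun X ↦ (isCocircuit_iff_isCocircuit hME).trans
    ⟨fun hX ↦ ⟨a X, ⟨mem_cocircuitSpan hX, ?_, fun c hc hc0 hss ↦ ?_⟩, (ha X hX).2⟩,
      fun ⟨c, hc, hcX⟩ ↦ hcX ▸ hc.isCocircuit_support hME ha hstar⟩⟩
  · exact ne_zero_of_chainSupport_eq (ha X hX).2 hX.nonempty
  · rw [(ha X hX).2] at hss
    obtain ⟨Y, hY, hYc⟩ := exists_isCocircuit_subset_support hME ha hstar hc hc0
    exact hss.2 (hY.eq_of_subset hX (hYc.trans hss.1) ▸ hYc)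

end Backward

/-- Tutte's representability criterion: let `M` be a matroid on a finite set
`E` with cocircuit set `𝒞*`, `P = (R, G)` a skew partial field and, for each cocircuit `X`,
let `a X` be a `G`-primitive chain with support `X`.  Let `C` be the left `R`-submodule of
`R^E` generated by the chains `a X`.  Then `C` is a `P`-chain group with `M(C) = M` if and
only if for every modular triple of cocircuits `X, X', X''` there are `p, p', p'' ∈ G` with
`p • a X + p' • a X' + p'' • a X'' = 0`. -/
theorem statement9 {R E : Type*} [Ring R] [Fintype E]
    (G : Subgroup Rˣ) (hG : (-1 : Rˣ) ∈ G)
    (M : Matroid E) (hME : M.E = Set.univ)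
    (a : Set E → (E → R))
    (ha : ∀ X, _root_.IsCocircuit M X → IsPrimitive G (a X) ∧ chainSupport (a X) = X) :
    (IsPChainGroup G (Submodule.span R (a '' {X | _root_.IsCocircuit M X})) ∧
        IsMatroidOf M ((Submodule.span R (a '' {X | _root_.IsCocircuit M X}) :
          Submodule R (E → R)) : Set (E → R))) ↔
      (∀ X X' X'', ModularTriple M X X' X'' →
        ∃ p ∈ G, ∃ p' ∈ G, ∃ p'' ∈ G,
          ((p : Rˣ) : R) • a X + ((p' : Rˣ) : R) • a X' + ((p'' : Rˣ) : R) • a X'' = 0) := by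
  have hcocircuits : {X | _root_.IsCocircuit M X} = {X | M.IsCocircuit X} :=
    Set.ext fun X ↦ isCocircuit_iff_isCocircuit hME
  have ha' : ∀ X, M.IsCocircuit X → IsPrimitive G (a X) ∧ chainSupport (a X) = X :=
    fun X hX ↦ ha X ((isCocircuit_iff_isCocircuit hME).2 hX)
  rw [hcocircuits]
  exact ⟨fun h _ _ _ hT ↦ exists_smul_add_smul_add_smul_eq_zero_of_isMatroidOf hG ha' h.2 hT,
    fun hstar ↦
      ⟨isPChainGroup_cocircuitSpan hME ha' hstar, isMatroidOf_cocircuitSpan hME ha' hstar⟩⟩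
end
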